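/- arXiv:0906.2484 — 2 statements merged into one kernel-verified Lean document; each statement's English description precedes it below -/
import Mathlib

section
/- Fix δ ∈ (0,1/3], let μ be the Borel measure on ℝ determined by μ([j + i·3^{−n}, j + (i+1)·3^{−n})) = δ^{n−k(i)}(1−2δ)^{k(i)} for all integers j, n ≥ 0 and 0 ≤ i < 3^n (where k(i) is the number of digits equal to 1 among the first n ternary digits of i), and for integers 0 ≤ k ≤ n let K(n,k) be the union of those triadic intervals I ⊆ [0,1) of length 3^{−n} with μ(I) ≥ δ^k (1−2δ)^{n−k}. If 2δn ≤ k ≤ (2/3)n, then 1 − μ(K(n,k)) ≤ exp(−2n·(k/n − 2δ)^2). -/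
open MeasureTheory Set

noncomputable section

/-- The number of ternary (base-3) digits of `i` equal to `1`. -/
def ternaryOnes (i : ℕ) : ℕ := (Nat.digits 3 i).count 1

/-- The triadic mass assignment determining the measure `μ`. -/
def ternarySpec (δ : ℝ) (μ : Measure ℝ) : Prop :=
  ∀ (j : ℤ) (n i : ℕ), i < 3 ^ n →
    μ (Set.Ico ((j : ℝ) + (i : ℝ) / 3 ^ n) ((j : ℝ) + ((i : ℝ) + 1) / 3 ^ n)) =
      ENNReal.ofReal (δ ^ (n - ternaryOnes i) * (1 - 2 * δ) ^ ternaryOnes i)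

/-- The triadic interval `[i·3⁻ⁿ, (i+1)·3⁻ⁿ) ⊆ [0,1)` of generation `n`, `0 ≤ i < 3 ^ n`. -/
def triIco (n i : ℕ) : Set ℝ := Set.Ico ((i : ℝ) / 3 ^ n) (((i : ℝ) + 1) / 3 ^ n)

/-- Indices `0 ≤ i < 3 ^ n` of the "heavy" triadic intervals of generation `n` inside `[0,1)`,
those with `μ(I) ≥ δ ^ k · (1 - 2δ) ^ (n - k)`. -/
def goodIdx (δ : ℝ) (μ : Measure ℝ) (n k : ℕ) : Set ℕ :=
  {i | i < 3 ^ n ∧ ENNReal.ofReal (δ ^ k * (1 - 2 * δ) ^ (n - k)) ≤ μ (triIco n i)}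

/-- `K(n,k)`: the union of the triadic intervals `I ⊆ [0,1)` of generation `n` with
`μ(I) ≥ δ ^ k · (1 - 2δ) ^ (n - k)`. -/
def Kset (δ : ℝ) (μ : Measure ℝ) (n k : ℕ) : Set ℝ := ⋃ i ∈ goodIdx δ μ n k, triIco n i

/-!
The interval with ternary index `i < 3 ^ n` has mass `δ ^ (n - s) (1 - 2δ) ^ s`, where `s` is the
number of digits `1` of `i`. Since `δ ≤ 1 - 2δ`, every interval with at most `k` digits in `{0, 2}`
lies in `K(n,k)`, so the complement of `K(n,k)` in `[0,1)` has mass at most the probability that a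
binomial variable with parameters `n` and `2δ` exceeds `k`. Chernoff's exponential moment bound,
combined with Hoeffding's lemma for a Bernoulli variable, bounds this tail by
`exp(-2n(k/n - 2δ)²)`.
-/

open ProbabilityTheory Finset

theorem one_sub_add_mul_exp_le {p : ℝ} (hp₀ : 0 ≤ p) (hp₁ : p ≤ 1) (t : ℝ) :
    1 - p + p * Real.exp t ≤ Real.exp (p * t + t ^ 2 / 8) := by
  set ν := bernoulliMeasure (1 : ℝ) 0 ⟨p, hp₀, hp₁⟩
  have hmean : ∫ z, z ∂ν = p := by simp [ν, integral_bernoulliMeasure]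
  have hν : ∀ᵐ z ∂ν, id z ∈ Icc (0 : ℝ) 1 := by
    rw [ae_iff]
    exact bernoulliMeasure_apply_of_notMem_of_notMem _ measurableSet_Icc.compl
      (by simp) (by simp)
  have hoeffding := (hasSubgaussianMGF_of_mem_Icc aemeasurable_id hν).mgf_le t
  simp only [mgf, id, hmean, ν, integral_bernoulliMeasure, smul_eq_mul] at hoeffding
  have h₁ : Real.exp (p * t) * Real.exp (t * (1 - p)) = Real.exp t := by
    rw [← Real.exp_add]; ring_nf
  have h₀ : Real.exp (p * t) * Real.exp (t * (0 - p)) = 1 := by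
    rw [← Real.exp_add, ← Real.exp_zero]; ring_nf
  calc 1 - p + p * Real.exp t
      = Real.exp (p * t) * (p * Real.exp (t * (1 - p)) + (1 - p) * Real.exp (t * (0 - p))) := by
        linear_combination (-p) * h₁ - (1 - p) * h₀
    _ ≤ Real.exp (p * t) * Real.exp (t ^ 2 / 8) := by
        gcongr
        refine hoeffding.trans_eq ?_
        congr 1
        norm_num
        ring
    _ = Real.exp (p * t + t ^ 2 / 8) := (Real.exp_add _ _).symm

theorem antitone_pow_mul_pow_sub {a b : ℝ} (ha : 0 ≤ a) (hab : a ≤ b) (hb : b ≤ 1) (n : ℕ) :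
    Antitone fun k => a ^ k * b ^ (n - k) := by
  refine antitone_nat_of_succ_le fun k => ?_
  rcases lt_or_ge k n with hk | hk
  · obtain ⟨m, hm⟩ : ∃ m, n - k = m + 1 := ⟨n - (k + 1), by omega⟩
    rw [hm, show n - (k + 1) = m by omega, pow_succ, pow_succ]
    have : 0 ≤ a ^ k * b ^ m := mul_nonneg (pow_nonneg ha k) (pow_nonneg (ha.trans hab) m)
    nlinarith
  · rw [show n - (k + 1) = 0 by omega, show n - k = 0 by omega, pow_zero, mul_one, mul_one]
    exact pow_le_pow_of_le_one ha (hab.trans hb) k.le_succ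

theorem sum_range_three_mul {M : Type*} [AddCommMonoid M] (m : ℕ) (f : ℕ → M) :
    ∑ i ∈ range (3 * m), f i = ∑ q ∈ range m, (f (3 * q) + f (3 * q + 1) + f (3 * q + 2)) := by
  induction m with
  | zero => simp
  | succ m ih =>
    rw [show 3 * (m + 1) = 3 * m + 2 + 1 by ring, sum_range_succ, sum_range_succ,
      sum_range_succ, ih, sum_range_succ]
    abel

theorem ternaryOnes_le_of_lt_pow {n i : ℕ} (hi : i < 3 ^ n) : ternaryOnes i ≤ n := by
  rcases eq_or_ne i 0 with rfl | h
  · simp [ternaryOnes]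
  · calc (Nat.digits 3 i).count 1 ≤ (Nat.digits 3 i).length := List.count_le_length
      _ = Nat.log 3 i + 1 := Nat.length_digits 3 i (by norm_num) h
      _ ≤ n := Nat.log_lt_of_lt_pow h hi

theorem ternaryOnes_three_mul_add (q : ℕ) {d : ℕ} (hd : d < 3) :
    ternaryOnes (3 * q + d) = ternaryOnes q + if d = 1 then 1 else 0 := by
  rcases eq_or_ne (3 * q + d) 0 with h0 | h0
  · obtain ⟨rfl, rfl⟩ : q = 0 ∧ d = 0 := by omega
    simp [ternaryOnes]
  · rw [ternaryOnes, Nat.digits_def' (by norm_num) (Nat.pos_of_ne_zero h0),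
      show (3 * q + d) % 3 = d by omega, show (3 * q + d) / 3 = q by omega, List.count_cons]
    simp [ternaryOnes]

theorem sum_pow_sub_ternaryOnes_mul_pow {R : Type*} [CommSemiring R] (a b : R) (n : ℕ) :
    ∑ i ∈ range (3 ^ n), a ^ (n - ternaryOnes i) * b ^ ternaryOnes i = (2 * a + b) ^ n := by
  induction n with
  | zero => simp [ternaryOnes]
  | succ n ih =>
    rw [pow_succ', sum_range_three_mul, pow_succ', ← ih, mul_sum]
    refine sum_congr rfl fun q hq => ?_
    have hs := ternaryOnes_le_of_lt_pow (mem_range.mp hq)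
    have e₀ := ternaryOnes_three_mul_add q (show 0 < 3 by norm_num)
    have e₁ := ternaryOnes_three_mul_add q (show 1 < 3 by norm_num)
    have e₂ := ternaryOnes_three_mul_add q (show 2 < 3 by norm_num)
    norm_num at e₀ e₁ e₂
    rw [e₀, e₁, e₂, show n + 1 - ternaryOnes q = n - ternaryOnes q + 1 by omega,
      show n + 1 - (ternaryOnes q + 1) = n - ternaryOnes q by omega]
    ring

def tailIdx (n k : ℕ) : Finset ℕ := (range (3 ^ n)).filter fun i => k < n - ternaryOnes i

theorem sum_tailIdx_le_exp_mul {a b t : ℝ} (ha : 0 ≤ a) (hb : 0 ≤ b) (ht : 0 ≤ t) (n k : ℕ) :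
    ∑ i ∈ tailIdx n k, a ^ (n - ternaryOnes i) * b ^ ternaryOnes i ≤
      Real.exp (-(t * k)) * (2 * (a * Real.exp t) + b) ^ n := by
  have tilt : ∀ i ∈ tailIdx n k, a ^ (n - ternaryOnes i) * b ^ ternaryOnes i ≤
      Real.exp (-(t * k)) * ((a * Real.exp t) ^ (n - ternaryOnes i) * b ^ ternaryOnes i) := by
    intro i hi
    have hki : (k : ℝ) ≤ (n - ternaryOnes i : ℕ) := by
      exact_mod_cast (mem_filter.mp hi).2.le
    have hexp : 1 ≤ Real.exp (-(t * k)) * Real.exp t ^ (n - ternaryOnes i) := by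
      rw [← Real.exp_nat_mul, ← Real.exp_add]
      exact Real.one_le_exp (by nlinarith)
    calc a ^ (n - ternaryOnes i) * b ^ ternaryOnes i
        ≤ (Real.exp (-(t * k)) * Real.exp t ^ (n - ternaryOnes i)) *
            (a ^ (n - ternaryOnes i) * b ^ ternaryOnes i) :=
          le_mul_of_one_le_left (by positivity) hexp
      _ = _ := by ring
  calc ∑ i ∈ tailIdx n k, a ^ (n - ternaryOnes i) * b ^ ternaryOnes i
      ≤ ∑ i ∈ tailIdx n k,
          Real.exp (-(t * k)) * ((a * Real.exp t) ^ (n - ternaryOnes i) * b ^ ternaryOnes i) :=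
        sum_le_sum tilt
    _ ≤ ∑ i ∈ range (3 ^ n),
          Real.exp (-(t * k)) * ((a * Real.exp t) ^ (n - ternaryOnes i) * b ^ ternaryOnes i) :=
        sum_le_sum_of_subset_of_nonneg (filter_subset _ _) fun _ _ _ => by positivity
    _ = Real.exp (-(t * k)) * (2 * (a * Real.exp t) + b) ^ n := by
        rw [← mul_sum, sum_pow_sub_ternaryOnes_mul_pow]

theorem sum_tailIdx_le_exp {δ : ℝ} (hδ₀ : 0 ≤ δ) (hδ : δ ≤ 1 / 3) {n k : ℕ}
    (hk : 2 * δ * n ≤ (k : ℝ)) :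
    ∑ i ∈ tailIdx n k, δ ^ (n - ternaryOnes i) * (1 - 2 * δ) ^ ternaryOnes i ≤
      Real.exp (-2 * n * ((k : ℝ) / n - 2 * δ) ^ 2) := by
  rcases Nat.eq_zero_or_pos n with rfl | hn
  · simp [tailIdx]
  have hn' : (0 : ℝ) < n := by exact_mod_cast hn
  -- the minimiser of `-t k + n (2δ t + t² / 8)`
  set t := 4 * ((k : ℝ) / n - 2 * δ)
  have ht : 0 ≤ t := by
    have : 2 * δ ≤ (k : ℝ) / n := by rwa [le_div_iff₀ hn']
    linarith
  have hmgf : 2 * (δ * Real.exp t) + (1 - 2 * δ) ≤ Real.exp (2 * δ * t + t ^ 2 / 8) := by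
    linarith [one_sub_add_mul_exp_le (p := 2 * δ) (by linarith) (by linarith) t]
  calc ∑ i ∈ tailIdx n k, δ ^ (n - ternaryOnes i) * (1 - 2 * δ) ^ ternaryOnes i
      ≤ Real.exp (-(t * k)) * (2 * (δ * Real.exp t) + (1 - 2 * δ)) ^ n :=
        sum_tailIdx_le_exp_mul hδ₀ (by linarith) ht n k
    _ ≤ Real.exp (-(t * k)) * Real.exp (2 * δ * t + t ^ 2 / 8) ^ n := by
        gcongr
        nlinarith [Real.exp_pos t]
    _ = Real.exp (-2 * n * ((k : ℝ) / n - 2 * δ) ^ 2) := by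
        rw [← Real.exp_nat_mul, ← Real.exp_add]
        congr 1
        simp only [t]
        field_simp
        ring

theorem Ico_zero_one_subset_biUnion_triIco (n : ℕ) :
    Set.Ico (0 : ℝ) 1 ⊆ ⋃ i ∈ range (3 ^ n), triIco n i := by
  intro x ⟨hx₀, hx₁⟩
  have h3 : (0 : ℝ) < 3 ^ n := by positivity
  refine mem_biUnion (x := ⌊x * 3 ^ n⌋₊) (mem_range.mpr ?_) ⟨?_, ?_⟩
  · exact (Nat.floor_lt (by positivity)).mpr (by simpa using mul_lt_mul_of_pos_right hx₁ h3)
  · exact (div_le_iff₀ h3).mpr (Nat.floor_le (by positivity))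
  · exact (lt_div_iff₀ h3).mpr (Nat.lt_floor_add_one _)

namespace ternarySpec

variable {δ : ℝ} {μ : Measure ℝ}

theorem measure_triIco (hμ : ternarySpec δ μ) {n i : ℕ} (hi : i < 3 ^ n) :
    μ (triIco n i) = ENNReal.ofReal (δ ^ (n - ternaryOnes i) * (1 - 2 * δ) ^ ternaryOnes i) := by
  simpa [triIco] using hμ 0 n i hi

theorem measure_Ico_zero_one (hμ : ternarySpec δ μ) : μ (Set.Ico 0 1) = 1 := by
  simpa [triIco, ternaryOnes] using hμ.measure_triIco (n := 0) (i := 0) one_pos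

theorem mem_goodIdx (hμ : ternarySpec δ μ) (hδ₀ : 0 ≤ δ) (hδ : δ ≤ 1 / 3) {n k i : ℕ}
    (hi : i < 3 ^ n) (hik : n - ternaryOnes i ≤ k) : i ∈ goodIdx δ μ n k := by
  refine ⟨hi, ?_⟩
  rw [hμ.measure_triIco hi]
  refine ENNReal.ofReal_le_ofReal ?_
  have : δ ^ k * (1 - 2 * δ) ^ (n - k) ≤
      δ ^ (n - ternaryOnes i) * (1 - 2 * δ) ^ (n - (n - ternaryOnes i)) :=
    antitone_pow_mul_pow_sub hδ₀ (by linarith) (by linarith) n hik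
  rwa [Nat.sub_sub_self (ternaryOnes_le_of_lt_pow hi)] at this

theorem Ico_zero_one_diff_Kset_subset (hμ : ternarySpec δ μ) (hδ₀ : 0 ≤ δ) (hδ : δ ≤ 1 / 3)
    (n k : ℕ) : Set.Ico 0 1 \ Kset δ μ n k ⊆ ⋃ i ∈ tailIdx n k, triIco n i := by
  intro x ⟨hx, hxK⟩
  obtain ⟨i, hi, hxi⟩ := mem_iUnion₂.mp (Ico_zero_one_subset_biUnion_triIco n hx)
  refine mem_biUnion (mem_filter.mpr ⟨hi, ?_⟩) hxi
  by_contra hik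
  exact hxK (mem_biUnion (hμ.mem_goodIdx hδ₀ hδ (mem_range.mp hi) (not_lt.mp hik)) hxi)

end ternarySpec

theorem measure_Kset_lower_bound_general (δ : ℝ) (hδ0 : 0 < δ) (hδ : δ ≤ 1 / 3)
    (μ : Measure ℝ) (hμ : ternarySpec δ μ) (n k : ℕ)
    (hk1 : 2 * δ * n ≤ (k : ℝ)) :
    1 - μ (Kset δ μ n k) ≤
      ENNReal.ofReal (Real.exp (-2 * n * ((k : ℝ) / n - 2 * δ) ^ 2)) := by
  have hb : 0 ≤ 1 - 2 * δ := by linarith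
  calc 1 - μ (Kset δ μ n k) = μ (Set.Ico 0 1) - μ (Kset δ μ n k) := by
        rw [hμ.measure_Ico_zero_one]
    _ ≤ μ (Set.Ico 0 1 \ Kset δ μ n k) := le_measure_sdiff
    _ ≤ μ (⋃ i ∈ tailIdx n k, triIco n i) :=
        measure_mono (hμ.Ico_zero_one_diff_Kset_subset hδ0.le hδ n k)
    _ ≤ ∑ i ∈ tailIdx n k, μ (triIco n i) := measure_biUnion_finset_le _ _
    _ = ∑ i ∈ tailIdx n k,
          ENNReal.ofReal (δ ^ (n - ternaryOnes i) * (1 - 2 * δ) ^ ternaryOnes i) :=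
        sum_congr rfl fun i hi => hμ.measure_triIco (mem_range.mp (mem_filter.mp hi).1)
    _ = ENNReal.ofReal
          (∑ i ∈ tailIdx n k, δ ^ (n - ternaryOnes i) * (1 - 2 * δ) ^ ternaryOnes i) :=
        (ENNReal.ofReal_sum_of_nonneg fun _ _ => by positivity).symm
    _ ≤ ENNReal.ofReal (Real.exp (-2 * n * ((k : ℝ) / n - 2 * δ) ^ 2)) :=
        ENNReal.ofReal_le_ofReal (sum_tailIdx_le_exp hδ0.le hδ hk1)

/-- If `2δn ≤ k ≤ (2/3)n` then `1 - μ(K(n,k)) ≤ exp(-2n(k/n - 2δ)²)`. -/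
theorem measure_Kset_lower_bound (δ : ℝ) (hδ0 : 0 < δ) (hδ : δ ≤ 1 / 3)
    (μ : Measure ℝ) (hμ : ternarySpec δ μ) (n k : ℕ)
    (hk1 : 2 * δ * n ≤ (k : ℝ)) (hk2 : (k : ℝ) ≤ 2 / 3 * n) :
    1 - μ (Kset δ μ n k) ≤
      ENNReal.ofReal (Real.exp (-2 * n * ((k : ℝ) / n - 2 * δ) ^ 2)) :=
  measure_Kset_lower_bound_general δ hδ0 hδ μ hμ n k hk1
end
end

section
/- Fix δ ∈ (0,1/3], d ≥ 2 and integers n, k with 2δn ≤ k ≤ (2/3)n. With μ, K(n,k), 𝒦^d(n,k), 𝒢(n,k) and the skeleton Sk as in the triadic construction, let Γ(n,k) = ∪_{Q ∈ 𝒦^d(n,k)} Sk(Q) ∪ ∪_{I_1,…,I_d ∈ 𝒢(n,k)} Sk(I_1×⋯×I_d). Then the one-dimensional Hausdorff measure satisfies ℋ¹(Γ(n,k)) ≤ d·2^d·e^{dk[1 + log(1/δ)]}. -/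
open MeasureTheory Set

noncomputable section

/-- The gaps of a set `K ⊆ ℝ`: the bounded connected components of `ℝ \ K`. -/
def gaps (K : Set ℝ) : Set (Set ℝ) :=
  {C | Bornology.IsBounded C ∧ ∃ x ∈ Kᶜ, C = connectedComponentIn Kᶜ x}

/-- The skeleton of the box `I 0 × ⋯ × I (d-1)`: the union over `j` of the products
`∂I 0 × ⋯ × ∂I (j-1) × I j × ∂I (j+1) × ⋯ × ∂I (d-1)`, i.e. the union of the
one-dimensional edges of the box. -/
def Sk (d : ℕ) (I : Fin d → Set ℝ) : Set (Fin d → ℝ) :=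
  ⋃ j : Fin d, Set.pi Set.univ fun m => if m = j then I m else frontier (I m)

/-- `Γ(n,k)`: the union of the skeletons of the cubes of `𝒦^d(n,k)` together with the
skeletons of all boxes `I₁ × ⋯ × I_d` with each `Iⱼ` a gap of `K(n,k)`. -/
def GammaNK (d : ℕ) (δ : ℝ) (μ : Measure ℝ) (n k : ℕ) : Set (Fin d → ℝ) :=
  (⋃ f ∈ {f : Fin d → ℕ | ∀ j, f j ∈ goodIdx δ μ n k}, Sk d fun j => triIco n (f j)) ∪
    ⋃ I ∈ {I : Fin d → Set ℝ | ∀ j, I j ∈ gaps (Kset δ μ n k)}, Sk d I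

/-- A subset of `ℝ^d = Fin d → ℝ`, viewed in the Euclidean space `ℝ^d`. -/
def toEuc (d : ℕ) (s : Set (Fin d → ℝ)) : Set (EuclideanSpace ℝ (Fin d)) :=
  (MeasurableEquiv.toLp 2 (Fin d → ℝ)) '' s

/-!
Heavy triadic intervals of generation `n` are disjoint subsets of `[0,1)`, each of mass at least
`δ^k (1-2δ)^(n-k)`, while `μ [0,1) = 1`; when `2δn ≤ k` the inequality `1 + y ≤ eʸ` turns this
into at most `E = e^{k(1 + log(1/δ))}` heavy intervals. Sending a gap of `K(n,k)` to the first
heavy interval on its right is injective, so there are at most `E` gaps as well. Hence `Γ(n,k)` is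
a union of at most `2Eᵈ` box skeletons with sides of length at most `1`, and each skeleton is
covered by `d·2^(d-1)` axis-parallel segments of length at most `1`.
-/

open scoped ENNReal

theorem isometry_toLp_update {d : ℕ} (x : Fin d → ℝ) (j : Fin d) :
    Isometry fun t : ℝ => WithLp.toLp 2 (Function.update x j t) := by
  refine Isometry.of_dist_eq fun t t' => ?_
  rw [dist_eq_norm, ← WithLp.toLp_sub, ← Function.update_sub, sub_self, ← Pi.single,
    ← PiLp.single, PiLp.norm_single, dist_eq_norm]

theorem hausdorffMeasure_toEuc_image_update_Icc {d : ℕ} (x : Fin d → ℝ) (j : Fin d) (p q : ℝ) :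
    μH[1] (toEuc d (Function.update x j '' Icc p q)) = ENNReal.ofReal (q - p) := by
  rw [toEuc, image_image]
  exact ((isometry_toLp_update x j).hausdorffMeasure_image (Or.inl zero_le_one) _).trans
    (by rw [hausdorffMeasure_real, Real.volume_Icc])

theorem card_piFinset_update_pair_le {d : ℕ} (a b : Fin d → ℝ) (j : Fin d) :
    (Fintype.piFinset (Function.update (fun m => ({a m, b m} : Finset ℝ)) j {a j})).card ≤
      2 ^ (d - 1) := by
  classical
  rw [Fintype.card_piFinset, ← Finset.mul_prod_erase _ _ (Finset.mem_univ j)]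
  calc _ ≤ 1 * 2 ^ (Finset.univ.erase j).card := by
        gcongr
        · simp
        · refine Finset.prod_le_pow_card _ _ _ fun m hm => ?_
          rw [Function.update_of_ne (Finset.ne_of_mem_erase hm)]
          exact Finset.card_le_two
    _ = 2 ^ (d - 1) := by simp

theorem hausdorffMeasure_toEuc_pi_le {d : ℕ} (j : Fin d) (s : Fin d → Set ℝ) (a b : Fin d → ℝ)
    (hj : s j ⊆ Icc (a j) (b j)) (hs : ∀ m ≠ j, s m ⊆ {a m, b m}) :
    μH[1] (toEuc d (univ.pi s)) ≤ 2 ^ (d - 1) * ENNReal.ofReal (b j - a j) := by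
  classical
  set T := Fintype.piFinset (Function.update (fun m => ({a m, b m} : Finset ℝ)) j {a j})
  have hcover : univ.pi s ⊆ ⋃ x ∈ T, Function.update x j '' Icc (a j) (b j) := by
    intro y hy
    refine mem_iUnion₂.2 ⟨Function.update y j (a j), Fintype.mem_piFinset.2 fun m => ?_,
      y j, hj (hy j trivial), by simp⟩
    rcases eq_or_ne m j with rfl | hm
    · simp
    · simpa [hm] using hs m hm (hy m trivial)
  calc μH[1] (toEuc d (univ.pi s))
      ≤ μH[1] (toEuc d (⋃ x ∈ T, Function.update x j '' Icc (a j) (b j))) :=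
        measure_mono (image_mono hcover)
    _ ≤ ∑ x ∈ T, μH[1] (toEuc d (Function.update x j '' Icc (a j) (b j))) := by
        rw [toEuc, image_iUnion₂]; exact measure_biUnion_finset_le _ _
    _ = T.card * ENNReal.ofReal (b j - a j) := by
        simp only [hausdorffMeasure_toEuc_image_update_Icc, Finset.sum_const, nsmul_eq_mul]
    _ ≤ 2 ^ (d - 1) * ENNReal.ofReal (b j - a j) := by
        gcongr; exact_mod_cast card_piFinset_update_pair_le a b j

theorem hausdorffMeasure_toEuc_Sk_le {d : ℕ} (I : Fin d → Set ℝ) (a b : Fin d → ℝ) {L : ℝ}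
    (hI : ∀ j, I j ⊆ Icc (a j) (b j)) (hfr : ∀ j, frontier (I j) ⊆ {a j, b j})
    (hL : ∀ j, b j - a j ≤ L) :
    μH[1] (toEuc d (Sk d I)) ≤ d * 2 ^ (d - 1) * ENNReal.ofReal L := by
  have hedge (j : Fin d) : μH[1] (toEuc d (univ.pi fun m => if m = j then I m else frontier (I m)))
      ≤ 2 ^ (d - 1) * ENNReal.ofReal L := by
    refine (hausdorffMeasure_toEuc_pi_le j _ a b (by simpa using hI j) fun m hm => ?_).trans ?_
    · simpa [hm] using hfr m
    · gcongr; exact hL j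
  calc μH[1] (toEuc d (Sk d I))
      ≤ ∑ j, μH[1] (toEuc d (univ.pi fun m => if m = j then I m else frontier (I m))) := by
        rw [Sk, toEuc, image_iUnion]; exact measure_iUnion_fintype_le _ _
    _ ≤ ∑ _j : Fin d, 2 ^ (d - 1) * ENNReal.ofReal L := Finset.sum_le_sum fun j _ => hedge j
    _ = d * 2 ^ (d - 1) * ENNReal.ofReal L := by simp [mul_assoc]

theorem measure_biUnion_pi_le {ι α β : Type*} [Fintype ι] [MeasurableSpace β] (ν : Measure β)
    {S : Set α} (hS : S.Finite) (F : (ι → α) → Set β) {c : ℝ≥0∞}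
    (hF : ∀ f, (∀ i, f i ∈ S) → ν (F f) ≤ c) :
    ν (⋃ f ∈ {f : ι → α | ∀ i, f i ∈ S}, F f) ≤ S.ncard ^ Fintype.card ι * c := by
  classical
  have hpi : {f : ι → α | ∀ i, f i ∈ S} = ↑(Fintype.piFinset fun _ : ι => hS.toFinset) := by
    ext f; simp
  calc ν (⋃ f ∈ {f : ι → α | ∀ i, f i ∈ S}, F f)
      ≤ ∑ f ∈ Fintype.piFinset (fun _ => hS.toFinset), ν (F f) := by
        rw [hpi]; exact measure_biUnion_finset_le _ _
    _ ≤ ∑ _f ∈ Fintype.piFinset (fun _ => hS.toFinset), c :=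
        Finset.sum_le_sum fun f hf => hF f fun i => by simpa using Fintype.mem_piFinset.1 hf i
    _ = S.ncard ^ Fintype.card ι * c := by
        simp [Fintype.card_piFinset, Set.ncard_eq_toFinset_card S hS]

theorem one_le_one_sub_pow_mul_exp {x : ℝ} {n k : ℕ} (h : n * x ≤ k) :
    1 ≤ (1 - x) ^ (n - k) * Real.exp k := by
  rcases le_or_gt n k with hnk | hkn
  · simp [Nat.sub_eq_zero_of_le hnk, Real.one_le_exp (Nat.cast_nonneg k)]
  have hx : x < 1 := by
    have : (k : ℝ) < n := by exact_mod_cast hkn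
    nlinarith
  have hpos : 0 < 1 - x := by linarith
  set y := x / (1 - x)
  have hy : ((n - k : ℕ) : ℝ) * y ≤ k := by
    rw [Nat.cast_sub hkn.le, ← mul_div_assoc, div_le_iff₀ hpos]
    linarith
  have hinv : 1 / (1 - x) ≤ Real.exp y := by
    calc 1 / (1 - x) = x / (1 - x) + 1 := by rw [div_add_one hpos.ne', add_sub_cancel]
      _ ≤ Real.exp y := Real.add_one_le_exp y
  calc (1 : ℝ) = (1 - x) ^ (n - k) * (1 / (1 - x)) ^ (n - k) := by
        rw [← mul_pow, mul_one_div_cancel hpos.ne', one_pow]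
    _ ≤ (1 - x) ^ (n - k) * Real.exp y ^ (n - k) := by gcongr
    _ = (1 - x) ^ (n - k) * Real.exp ((n - k : ℕ) * y) := by rw [Real.exp_nat_mul]
    _ ≤ (1 - x) ^ (n - k) * Real.exp k := by gcongr

theorem one_le_threshold_mul_exp {δ : ℝ} (hδ : 0 < δ) {n k : ℕ} (hk : 2 * δ * n ≤ k) :
    1 ≤ δ ^ k * (1 - 2 * δ) ^ (n - k) * Real.exp (k * (1 + Real.log (1 / δ))) := by
  have hexp : Real.exp (k * (1 + Real.log (1 / δ))) = Real.exp k * (1 / δ) ^ k := by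
    rw [mul_add, mul_one, Real.exp_add, Real.exp_nat_mul, Real.exp_log (by positivity)]
  calc (1 : ℝ) ≤ (1 - 2 * δ) ^ (n - k) * Real.exp k :=
        one_le_one_sub_pow_mul_exp (by linarith)
    _ = δ ^ k * (1 - 2 * δ) ^ (n - k) * Real.exp (k * (1 + Real.log (1 / δ))) := by
        rw [hexp, one_div_pow]; field_simp

section Counting

variable {δ : ℝ} {μ : Measure ℝ} {n k : ℕ}

theorem triIco_subset_Ico {i : ℕ} (hi : i < 3 ^ n) : triIco n i ⊆ Ico 0 1 := by
  have hi' : (i : ℝ) + 1 ≤ 3 ^ n := by exact_mod_cast hi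
  intro y ⟨hy₀, hy₁⟩
  exact ⟨le_trans (by positivity) hy₀, hy₁.trans_le ((div_le_one (by positivity)).2 hi')⟩

theorem Kset_subset_Icc : Kset δ μ n k ⊆ Icc 0 1 :=
  iUnion₂_subset fun _ hi => (triIco_subset_Ico hi.1).trans Ico_subset_Icc_self

theorem pairwise_disjoint_triIco : Pairwise (Function.onFun Disjoint (triIco n)) := by
  refine (pairwise_disjoint_on _).2 fun i j hij => disjoint_left.2 fun y hyi hyj => ?_
  have : ((i : ℝ) + 1) / 3 ^ n ≤ j / 3 ^ n := by gcongr; exact_mod_cast hij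
  exact (hyi.2.trans_le this).not_ge hyj.1

theorem measure_Ico_zero_one (hμ : ternarySpec δ μ) : μ (Ico 0 1) = 1 := by
  simpa [ternaryOnes] using hμ 0 0 0 one_pos

theorem goodIdx_finite : (goodIdx δ μ n k).Finite :=
  (finite_Iio (3 ^ n)).subset fun _ hi => hi.1

theorem ncard_goodIdx_mul_le (hμ : ternarySpec δ μ) :
    (goodIdx δ μ n k).ncard * ENNReal.ofReal (δ ^ k * (1 - 2 * δ) ^ (n - k)) ≤ 1 := by
  set G := (goodIdx_finite (δ := δ) (μ := μ) (n := n) (k := k)).toFinset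
  have hG (i : ℕ) : i ∈ G ↔ i ∈ goodIdx δ μ n k := Set.Finite.mem_toFinset _
  calc (goodIdx δ μ n k).ncard * ENNReal.ofReal (δ ^ k * (1 - 2 * δ) ^ (n - k))
      = ∑ _i ∈ G, ENNReal.ofReal (δ ^ k * (1 - 2 * δ) ^ (n - k)) := by
        rw [Finset.sum_const, nsmul_eq_mul, Set.ncard_eq_toFinset_card _ goodIdx_finite]
    _ ≤ ∑ i ∈ G, μ (triIco n i) := Finset.sum_le_sum fun i hi => ((hG i).1 hi).2
    _ = μ (⋃ i ∈ G, triIco n i) :=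
        (measure_biUnion_finset (pairwise_disjoint_triIco.set_pairwise _)
          fun _ _ => measurableSet_Ico).symm
    _ ≤ μ (Ico 0 1) := measure_mono <| iUnion₂_subset fun i hi => triIco_subset_Ico ((hG i).1 hi).1
    _ = 1 := measure_Ico_zero_one hμ

theorem ncard_goodIdx_le (hδ : 0 < δ) (hμ : ternarySpec δ μ) (hk : 2 * δ * n ≤ k) :
    ((goodIdx δ μ n k).ncard : ℝ≥0∞) ≤ ENNReal.ofReal (Real.exp (k * (1 + Real.log (1 / δ)))) := by
  set c := δ ^ k * (1 - 2 * δ) ^ (n - k)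
  set E := Real.exp (k * (1 + Real.log (1 / δ)))
  have hcE : 1 ≤ ENNReal.ofReal c * ENNReal.ofReal E := by
    rw [← ENNReal.ofReal_mul' (Real.exp_pos _).le, ← ENNReal.ofReal_one]
    exact ENNReal.ofReal_le_ofReal (one_le_threshold_mul_exp hδ hk)
  calc ((goodIdx δ μ n k).ncard : ℝ≥0∞)
      ≤ (goodIdx δ μ n k).ncard * (ENNReal.ofReal c * ENNReal.ofReal E) :=
        le_mul_of_one_le_right' hcE
    _ = (goodIdx δ μ n k).ncard * ENNReal.ofReal c * ENNReal.ofReal E := (mul_assoc _ _ _).symm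
    _ ≤ 1 * ENNReal.ofReal E := by gcongr; exact ncard_goodIdx_mul_le hμ
    _ = ENNReal.ofReal E := one_mul _

end Counting

theorem frontier_subset_csInf_csSup {s : Set ℝ} (hs : IsConnected s) (hb : Bornology.IsBounded s) :
    frontier s ⊆ {sInf s, sSup s} := by
  have hcl : closure s ⊆ Icc (sInf s) (sSup s) :=
    closure_minimal (subset_Icc_csInf_csSup hb.bddBelow hb.bddAbove) isClosed_Icc
  have hint : Ioo (sInf s) (sSup s) ⊆ interior s :=
    interior_maximal (hs.Ioo_csInf_csSup_subset hb.bddBelow hb.bddAbove) isOpen_Ioo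
  rw [← Icc_sdiff_Ioo_same (csInf_le_csSup hs.nonempty hb.bddBelow hb.bddAbove)]
  exact sdiff_subset_sdiff hcl hint

section Gaps

variable {K C C' : Set ℝ}

theorem eq_connectedComponentIn_of_mem_gaps (hC : C ∈ gaps K) {x : ℝ} (hx : x ∈ C) :
    C = connectedComponentIn Kᶜ x := by
  obtain ⟨-, y, -, rfl⟩ := hC
  exact connectedComponentIn_eq hx

theorem isConnected_of_mem_gaps (hC : C ∈ gaps K) : IsConnected C := by
  obtain ⟨-, x, hx, rfl⟩ := hC
  exact isConnected_connectedComponentIn_iff.2 hx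

theorem subset_compl_of_mem_gaps (hC : C ∈ gaps K) : C ⊆ Kᶜ := by
  obtain ⟨-, x, -, rfl⟩ := hC
  exact connectedComponentIn_subset _ _

theorem exists_mem_ge_of_mem_gaps (hC : C ∈ gaps K) {y : ℝ} (hy : y ∈ C) : ∃ z ∈ K, y ≤ z := by
  by_contra! h
  have hray : Ici y ⊆ C := by
    rw [eq_connectedComponentIn_of_mem_gaps hC hy]
    exact isPreconnected_Ici.subset_connectedComponentIn self_mem_Ici
      fun z hz hzK => (h z hzK).not_ge hz
  exact not_bddAbove_Ici y (hC.1.bddAbove.mono hray)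

theorem exists_mem_le_of_mem_gaps (hC : C ∈ gaps K) {y : ℝ} (hy : y ∈ C) : ∃ z ∈ K, z ≤ y := by
  by_contra! h
  have hray : Iic y ⊆ C := by
    rw [eq_connectedComponentIn_of_mem_gaps hC hy]
    exact isPreconnected_Iic.subset_connectedComponentIn self_mem_Iic
      fun z hz hzK => (h z hzK).not_ge hz
  exact not_bddBelow_Iic y (hC.1.bddBelow.mono hray)

theorem subset_Icc_of_mem_gaps {a b : ℝ} (hK : K ⊆ Icc a b) (hC : C ∈ gaps K) : C ⊆ Icc a b := by
  intro y hy
  obtain ⟨z, hzK, hyz⟩ := exists_mem_ge_of_mem_gaps hC hy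
  obtain ⟨z', hz'K, hz'y⟩ := exists_mem_le_of_mem_gaps hC hy
  exact ⟨(hK hz'K).1.trans hz'y, hyz.trans (hK hzK).2⟩

theorem exists_mem_Ioo_of_mem_gaps (hC : C ∈ gaps K) (hC' : C' ∈ gaps K) (hne : C ≠ C')
    {x x' : ℝ} (hx : x ∈ C) (hx' : x' ∈ C') (hlt : x < x') : ∃ z ∈ K, z ∈ Ioo x x' := by
  by_contra! h
  have hIcc : Icc x x' ⊆ C := by
    rw [eq_connectedComponentIn_of_mem_gaps hC hx]
    refine isPreconnected_Icc.subset_connectedComponentIn (left_mem_Icc.2 hlt.le) fun z hz hzK => ?_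
    rcases hz.1.eq_or_lt with rfl | hxz
    · exact subset_compl_of_mem_gaps hC hx hzK
    rcases hz.2.eq_or_lt with rfl | hzx'
    · exact subset_compl_of_mem_gaps hC' hx' hzK
    exact h z hzK ⟨hxz, hzx'⟩
  exact hne <| (eq_connectedComponentIn_of_mem_gaps hC (hIcc (right_mem_Icc.2 hlt.le))).trans
    (eq_connectedComponentIn_of_mem_gaps hC' hx').symm

theorem lt_of_mem_gaps_of_Ico_subset {a b : ℝ} (hC : C ∈ gaps K) (hK : Ico a b ⊆ K)
    {y z : ℝ} (hy : y ∈ C) (hz : z ∈ Ico a b) (hyz : y ≤ z) {c : ℝ} (hc : c ∈ C) : c < a := by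
  by_contra! hac
  have hbc : b ≤ c := not_lt.1 fun hcb => subset_compl_of_mem_gaps hC hc (hK ⟨hac, hcb⟩)
  have hzC : z ∈ C := (isConnected_of_mem_gaps hC).isPreconnected.ordConnected.out hy hc
    ⟨hyz, hz.2.le.trans hbc⟩
  exact subset_compl_of_mem_gaps hC hzC (hK hz)

end Gaps

/-- The index of the first heavy interval lying entirely to the right of `C`. -/
def nextGoodIdx (δ : ℝ) (μ : Measure ℝ) (n k : ℕ) (C : Set ℝ) : ℕ :=
  sInf {i | i ∈ goodIdx δ μ n k ∧ ∀ c ∈ C, c < i / 3 ^ n}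

section NextGoodIdx

variable {δ : ℝ} {μ : Measure ℝ} {n k : ℕ} {C C' : Set ℝ}

theorem lt_of_mem_gaps_Kset_of_mem_triIco (hC : C ∈ gaps (Kset δ μ n k)) {i : ℕ}
    (hi : i ∈ goodIdx δ μ n k) {y z : ℝ} (hy : y ∈ C) (hz : z ∈ triIco n i) (hyz : y ≤ z)
    {c : ℝ} (hc : c ∈ C) : c < i / 3 ^ n :=
  lt_of_mem_gaps_of_Ico_subset hC (subset_biUnion_of_mem (u := triIco n) hi) hy hz hyz hc

theorem nextGoodIdx_spec (hC : C ∈ gaps (Kset δ μ n k)) :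
    nextGoodIdx δ μ n k C ∈ goodIdx δ μ n k ∧
      ∀ c ∈ C, c < nextGoodIdx δ μ n k C / 3 ^ n := by
  obtain ⟨y, hy⟩ := (isConnected_of_mem_gaps hC).nonempty
  obtain ⟨z, hzK, hyz⟩ := exists_mem_ge_of_mem_gaps hC hy
  obtain ⟨i, hi, hzi⟩ := mem_iUnion₂.1 hzK
  have hne : {i | i ∈ goodIdx δ μ n k ∧ ∀ c ∈ C, c < i / 3 ^ n}.Nonempty :=
    ⟨i, hi, fun _ => lt_of_mem_gaps_Kset_of_mem_triIco hC hi hy hzi hyz⟩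
  exact Nat.sInf_mem hne

theorem nextGoodIdx_lt (hC : C ∈ gaps (Kset δ μ n k)) (hC' : C' ∈ gaps (Kset δ μ n k))
    (hne : C ≠ C') {x x' : ℝ} (hx : x ∈ C) (hx' : x' ∈ C') (hlt : x < x') :
    nextGoodIdx δ μ n k C < nextGoodIdx δ μ n k C' := by
  obtain ⟨z, hzK, hxz, hzx'⟩ := exists_mem_Ioo_of_mem_gaps hC hC' hne hx hx' hlt
  obtain ⟨i, hi, hzi⟩ := mem_iUnion₂.1 hzK
  have hle : nextGoodIdx δ μ n k C ≤ i :=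
    Nat.sInf_le ⟨hi, fun _ => lt_of_mem_gaps_Kset_of_mem_triIco hC hi hx hzi hxz.le⟩
  have hlt' : (i : ℝ) / 3 ^ n < nextGoodIdx δ μ n k C' / 3 ^ n :=
    hzi.1.trans_lt (hzx'.trans ((nextGoodIdx_spec hC').2 x' hx'))
  exact hle.trans_lt (by exact_mod_cast (div_lt_div_iff_of_pos_right (by positivity)).1 hlt')

theorem injOn_nextGoodIdx : InjOn (nextGoodIdx δ μ n k) (gaps (Kset δ μ n k)) := by
  intro C hC C' hC' heq
  by_contra hne
  obtain ⟨x, hx⟩ := (isConnected_of_mem_gaps hC).nonempty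
  obtain ⟨x', hx'⟩ := (isConnected_of_mem_gaps hC').nonempty
  rcases lt_trichotomy x x' with hlt | rfl | hlt
  · exact (nextGoodIdx_lt hC hC' hne hx hx' hlt).ne heq
  · exact hne ((eq_connectedComponentIn_of_mem_gaps hC hx).trans
      (eq_connectedComponentIn_of_mem_gaps hC' hx').symm)
  · exact (nextGoodIdx_lt hC' hC (Ne.symm hne) hx' hx hlt).ne heq.symm

theorem mapsTo_nextGoodIdx : MapsTo (nextGoodIdx δ μ n k) (gaps (Kset δ μ n k)) (goodIdx δ μ n k) :=
  fun _ hC => (nextGoodIdx_spec hC).1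

theorem gaps_Kset_finite : (gaps (Kset δ μ n k)).Finite :=
  Finite.of_injOn mapsTo_nextGoodIdx injOn_nextGoodIdx goodIdx_finite

theorem ncard_gaps_Kset_le : (gaps (Kset δ μ n k)).ncard ≤ (goodIdx δ μ n k).ncard :=
  ncard_le_ncard_of_injOn _ mapsTo_nextGoodIdx injOn_nextGoodIdx goodIdx_finite

end NextGoodIdx

theorem hausdorffMeasure_toEuc_Sk_triIco_le (d n : ℕ) (f : Fin d → ℕ) :
    μH[1] (toEuc d (Sk d fun j => triIco n (f j))) ≤ d * 2 ^ (d - 1) := by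
  have h3 : (1 : ℝ) ≤ 3 ^ n := one_le_pow₀ (by norm_num)
  refine (hausdorffMeasure_toEuc_Sk_le (L := 1) _ (fun j => (f j : ℝ) / 3 ^ n)
    (fun j => ((f j : ℝ) + 1) / 3 ^ n) (fun j => Ico_subset_Icc_self)
    (fun j => (frontier_Ico (by gcongr; linarith)).subset)
    (fun j => by rw [← sub_div, add_sub_cancel_left, div_le_one (by positivity)]; exact h3)).trans
    (by simp)

theorem hausdorffMeasure_toEuc_Sk_gaps_le {d : ℕ} {K : Set ℝ} {a b : ℝ} (hK : K ⊆ Icc a b)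
    (I : Fin d → Set ℝ) (hI : ∀ j, I j ∈ gaps K) :
    μH[1] (toEuc d (Sk d I)) ≤ d * 2 ^ (d - 1) * ENNReal.ofReal (b - a) := by
  have hne (j : Fin d) := (isConnected_of_mem_gaps (hI j)).nonempty
  have hab (j : Fin d) := subset_Icc_of_mem_gaps hK (hI j)
  refine hausdorffMeasure_toEuc_Sk_le I (fun j => sInf (I j)) (fun j => sSup (I j))
    (fun j => subset_Icc_csInf_csSup (hI j).1.bddBelow (hI j).1.bddAbove)
    (fun j => frontier_subset_csInf_csSup (isConnected_of_mem_gaps (hI j)) (hI j).1)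
    (fun j => ?_)
  have := csSup_le (hne j) fun y hy => (hab j hy).2
  have := le_csInf (hne j) fun y hy => (hab j hy).1
  linarith

theorem hausdorffMeasure_toEuc_cubes_le (d : ℕ) (δ : ℝ) (μ : Measure ℝ) (n k : ℕ) :
    μH[1] (toEuc d (⋃ f ∈ {f : Fin d → ℕ | ∀ j, f j ∈ goodIdx δ μ n k},
      Sk d fun j => triIco n (f j))) ≤ (goodIdx δ μ n k).ncard ^ d * (d * 2 ^ (d - 1)) := by
  rw [toEuc, image_iUnion₂]
  exact (measure_biUnion_pi_le _ goodIdx_finite _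
    fun f _ => hausdorffMeasure_toEuc_Sk_triIco_le d n f).trans (by simp)

theorem hausdorffMeasure_toEuc_gapBoxes_le (d : ℕ) (δ : ℝ) (μ : Measure ℝ) (n k : ℕ) :
    μH[1] (toEuc d (⋃ I ∈ {I : Fin d → Set ℝ | ∀ j, I j ∈ gaps (Kset δ μ n k)}, Sk d I)) ≤
      (goodIdx δ μ n k).ncard ^ d * (d * 2 ^ (d - 1)) := by
  rw [toEuc, image_iUnion₂]
  refine (measure_biUnion_pi_le _ gaps_Kset_finite _
    fun I hI => hausdorffMeasure_toEuc_Sk_gaps_le Kset_subset_Icc I hI).trans ?_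
  simp only [Fintype.card_fin, sub_zero, ENNReal.ofReal_one, mul_one]
  gcongr
  exact ncard_gaps_Kset_le

theorem hausdorff_GammaNK_le_general (d : ℕ) (δ : ℝ) (hδ0 : 0 < δ)
    (μ : Measure ℝ) (hμ : ternarySpec δ μ) (n k : ℕ)
    (hk1 : 2 * δ * n ≤ (k : ℝ)) :
    μH[1] (toEuc d (GammaNK d δ μ n k)) ≤
      ENNReal.ofReal ((d : ℝ) * 2 ^ d *
        Real.exp ((d : ℝ) * k * (1 + Real.log (1 / δ)))) := by
  set N := (goodIdx δ μ n k).ncard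
  set E := Real.exp (k * (1 + Real.log (1 / δ)))
  have hd : (d : ℝ≥0∞) * 2 ^ (d - 1) + d * 2 ^ (d - 1) = d * 2 ^ d := by
    rcases d with _ | d
    · simp
    · rw [← mul_add, ← two_mul, pow_succ']; rfl
  calc μH[1] (toEuc d (GammaNK d δ μ n k))
      ≤ N ^ d * (d * 2 ^ (d - 1)) + N ^ d * (d * 2 ^ (d - 1)) := by
        rw [GammaNK, toEuc, image_union]
        exact (measure_union_le _ _).trans (add_le_add (hausdorffMeasure_toEuc_cubes_le d δ μ n k)
          (hausdorffMeasure_toEuc_gapBoxes_le d δ μ n k))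
    _ = N ^ d * (d * 2 ^ d) := by rw [← mul_add, hd]
    _ ≤ ENNReal.ofReal E ^ d * ENNReal.ofReal (d * 2 ^ d) := by
        gcongr
        · exact ncard_goodIdx_le hδ0 hμ hk1
        · rw [ENNReal.ofReal_mul (by positivity)]; simp
    _ = ENNReal.ofReal ((d : ℝ) * 2 ^ d * Real.exp ((d : ℝ) * k * (1 + Real.log (1 / δ)))) := by
        rw [← ENNReal.ofReal_pow (Real.exp_pos _).le, ← ENNReal.ofReal_mul (by positivity),
          mul_comm, ← Real.exp_nat_mul, mul_assoc, mul_assoc, mul_assoc]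

/-- If `2δn ≤ k ≤ (2/3)n` then `ℋ¹(Γ(n,k)) ≤ d·2^d·exp(dk(1 + log(1/δ)))`. -/
theorem hausdorff_GammaNK_le (d : ℕ) (hd : 2 ≤ d) (δ : ℝ) (hδ0 : 0 < δ) (hδ : δ ≤ 1 / 3)
    (μ : Measure ℝ) (hμ : ternarySpec δ μ) (n k : ℕ)
    (hk1 : 2 * δ * n ≤ (k : ℝ)) (hk2 : (k : ℝ) ≤ 2 / 3 * n) :
    μH[1] (toEuc d (GammaNK d δ μ n k)) ≤
      ENNReal.ofReal ((d : ℝ) * 2 ^ d *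
        Real.exp ((d : ℝ) * k * (1 + Real.log (1 / δ)))) :=
  hausdorff_GammaNK_le_general d δ hδ0 μ hμ n k hk1
end
end
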